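/- arXiv:1509.08281 — 7 statements merged into one kernel-verified Lean document; each statement's English description precedes it below -/
import Mathlib

section
/- For every z > log(4 + √62/2)/3, the inequality (6e^{6z}+3) / (2(2e^{6z}(3z+5) + e^{3z} + 3z + 7)) > (36e^{6z}(8z+13) - 60e^{3z} - 3) / (16(2e^{3z}(3z+5) - 1)^2) holds. -/
open Real

theorem cost_comparison : ∀ z : ℝ, Real.log (4 + Real.sqrt 62 / 2) / 3 < z →
    (36*Real.exp (6*z)*(8*z+13) - 60*Real.exp (3*z) - 3)
        / (16*(2*Real.exp (3*z)*(3*z+5) - 1)^2)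
      < (6*Real.exp (6*z)+3)
        / (2*(2*Real.exp (6*z)*(3*z+5) + Real.exp (3*z) + 3*z + 7)) := by
  intro z hz
  have hs0 : (0:ℝ) ≤ Real.sqrt 62 := Real.sqrt_nonneg 62
  have hs2 : Real.sqrt 62 ^ 2 = 62 := Real.sq_sqrt (by norm_num)
  have hs78 : (7.8:ℝ) < Real.sqrt 62 := by nlinarith
  have hcpos : (0:ℝ) < 4 + Real.sqrt 62 / 2 := by linarith
  have hc1 : (1:ℝ) < 4 + Real.sqrt 62 / 2 := by linarith
  have ht : Real.log (4 + Real.sqrt 62 / 2) < 3 * z := by linarith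
  have ht0 : 0 < 3 * z := lt_trans (Real.log_pos hc1) ht
  set x := Real.exp (3*z) with hxdef
  have hxc : 4 + Real.sqrt 62 / 2 < x := by
    calc 4 + Real.sqrt 62 / 2 = Real.exp (Real.log (4 + Real.sqrt 62 / 2)) :=
          (Real.exp_log hcpos).symm
      _ < x := Real.exp_lt_exp.mpr ht
  have hx79 : (7.9:ℝ) < x := by linarith
  have hx6 : Real.exp (6*z) = x^2 := by
    rw [hxdef, sq, ← Real.exp_add]; ring_nf
  -- (x-4)^2 > 62/4
  have hsq : (62:ℝ)/4 < (x - 4)^2 := by nlinarith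
  have hg : (0:ℝ) ≤ 2*x^2 - 16*x + 1 := by nlinarith
  have hh : (0:ℝ) < 240*x^4 - 1656*x^3 - 1476*x^2 - 114*x + 90 := by nlinarith
  have hP : (0:ℝ) ≤ (3*z) * ((2*x^2 - 16*x + 1) * (2*x+1)^2) :=
    mul_nonneg ht0.le (mul_nonneg hg (sq_nonneg _))
  have hF : 0 < 16*(6*x^2+3)*(2*x*(3*z+5)-1)^2
      - 2*(36*x^2*(8*z+13) - 60*x - 3)*(2*x^2*(3*z+5)+x+3*z+7) := by
    nlinarith [hP, hh]
  have hB : (0:ℝ) < 2*x*(3*z+5) - 1 := by nlinarith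
  have hden1 : (0:ℝ) < 16*(2*x*(3*z+5) - 1)^2 := by positivity
  have hden2 : (0:ℝ) < 2*(2*x^2*(3*z+5) + x + 3*z + 7) := by nlinarith
  rw [hx6]
  rw [div_lt_div_iff₀ hden1 hden2]
  nlinarith [hF]
end

section
/- Let κ ≥ 1/2, κ ≠ 2, α ∈ [0,1], and set f(t) = t^2(κ-2)^2 - 2t(2+(κ-1)κ) + (κ+1)^2. If 1/2 ≤ κ < 2/3 then f(t) ≥ 8(1-κ)κ/(κ-2)^2 > 0 for all t ∈ [0,1]; if κ ≥ 2/3 then f is nonincreasing on [0,1] and f(t) ≥ f(1) = 1 for all t ∈ [0,1]. -/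
open Real

theorem quadratic_f_bounds (κ : ℝ) (hκ : 1/2 ≤ κ) (hκ2 : κ ≠ 2)
    (f : ℝ → ℝ)
    (hf : ∀ t, f t = t^2*(κ-2)^2 - 2*t*(2+(κ-1)*κ) + (κ+1)^2) :
    (κ < 2/3 →
      (∀ t ∈ Set.Icc (0:ℝ) 1, 8*(1-κ)*κ/(κ-2)^2 ≤ f t) ∧
      0 < 8*(1-κ)*κ/(κ-2)^2) ∧
    (2/3 ≤ κ →
      AntitoneOn f (Set.Icc (0:ℝ) 1) ∧ f 1 = 1 ∧
      ∀ t ∈ Set.Icc (0:ℝ) 1, 1 ≤ f t) := by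
  have hne : κ - 2 ≠ 0 := sub_ne_zero.mpr hκ2
  have hsq : (0:ℝ) < (κ-2)^2 := by positivity
  constructor
  · intro hlt
    constructor
    · intro t _
      rw [hf t, div_le_iff₀ hsq]
      nlinarith [sq_nonneg ((κ-2)^2*t - (2+(κ-1)*κ))]
    · have : 0 < 8*(1-κ)*κ := by nlinarith
      positivity
  · intro hge
    refine ⟨?_, by rw [hf 1]; ring, ?_⟩
    · intro x hx y hy hxy
      rw [hf x, hf y]
      have hb : (x+y)*(κ-2)^2 ≤ 2*(2+(κ-1)*κ) := by
        nlinarith [hx.1, hx.2, hy.1, hy.2]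
      nlinarith [mul_nonneg (sub_nonneg.2 hxy) (sub_nonneg.2 hb)]
    · intro t ht
      rw [hf t]
      nlinarith [ht.1, ht.2, sq_nonneg (1 - t)]
end

section
/- Let ρ, T > 0, κ > 1/2, and for each N set α_N = e^{-ρT/N} and ω_i^{(N)} = ((1-α_N)κ + α_N(α_N(κ-1)/κ)^{N+1-i}) / (κ(κ - α_N(κ-1))) for i = 1, …, N+1. Then the total sum ∑_{i=1}^{N+1} ω_i^{(N)} converges to ρT + 1 as N → ∞. -/
/-!
Write `α = α_N` and `q = α (κ - 1) / κ`. Summing the constant and the geometric parts separately,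
`∑ ω_i = ((N + 1)(1 - α) κ + α ∑_{j ≤ N} q ^ j) / (κ (κ - α (κ - 1)))`.
As `N → ∞` we have `α → 1`, `(N + 1)(1 - α) → ρT` (the derivative of `exp` at `0`), and
`q → (κ - 1) / κ`, which has modulus `< 1` because `κ > 1/2`; so the geometric sums, although their
ratio moves with `N`, tend to `1 / (1 - (κ - 1) / κ) = κ`. The limit is `(ρTκ + κ) / κ = ρT + 1`.
-/

open Real Filter Topology Finset

theorem sum_Icc_one_reflect {M : Type*} [AddCommMonoid M] (f : ℕ → M) (n : ℕ) :
    ∑ i ∈ Icc 1 (n + 1), f (n + 1 - i) = ∑ i ∈ range (n + 1), f i := by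
  rw [← Ico_add_one_right_eq_Icc, sum_Ico_eq_sum_range, ← sum_range_reflect]
  refine sum_congr rfl fun i hi => ?_
  have := mem_range.mp hi
  congr 1
  omega

theorem sum_Icc_const_add_mul_pow_div {K : Type*} [Field K] (a b x d : K) (n : ℕ) :
    ∑ i ∈ Icc 1 (n + 1), (a + b * x ^ (n + 1 - i)) / d
      = ((n + 1) * a + b * ∑ i ∈ range (n + 1), x ^ i) / d := by
  rw [← sum_div, sum_add_distrib, ← mul_sum, sum_Icc_one_reflect (x ^ ·), sum_const,
    Nat.card_Icc, nsmul_eq_mul]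
  push_cast
  ring

theorem tendsto_pow_of_tendsto_of_abs_lt_one {u : ℕ → ℝ} {k : ℕ → ℕ} {q : ℝ}
    (hu : Tendsto u atTop (𝓝 q)) (hq : |q| < 1) (hk : Tendsto k atTop atTop) :
    Tendsto (fun n => u n ^ k n) atTop (𝓝 0) := by
  obtain ⟨s, hqs, hs1⟩ := exists_between hq
  have hus : ∀ᶠ n in atTop, |u n| < s := hu.abs.eventually (eventually_lt_nhds hqs)
  refine squeeze_zero_norm' ?_
    ((tendsto_pow_atTop_nhds_zero_of_lt_one ((abs_nonneg q).trans hqs.le) hs1).comp hk)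
  filter_upwards [hus] with n hn
  rw [norm_pow, Real.norm_eq_abs]
  exact pow_le_pow_left₀ (abs_nonneg _) hn.le _

theorem tendsto_geom_sum_of_tendsto {u : ℕ → ℝ} {q : ℝ} (hu : Tendsto u atTop (𝓝 q))
    (hq : |q| < 1) :
    Tendsto (fun n => ∑ i ∈ range (n + 1), u n ^ i) atTop (𝓝 (1 - q)⁻¹) := by
  have hq1 : q ≠ 1 := fun h => by simp [h] at hq
  have hlim : Tendsto (fun n => (u n ^ (n + 1) - 1) / (u n - 1)) atTop (𝓝 ((0 - 1) / (q - 1))) :=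
    ((tendsto_pow_of_tendsto_of_abs_lt_one hu hq (tendsto_add_atTop_nat 1)).sub_const 1).div
      (hu.sub_const 1) (sub_ne_zero.mpr hq1)
  rw [zero_sub, neg_div, ← div_neg, neg_sub, one_div] at hlim
  refine hlim.congr' ?_
  filter_upwards [hu.eventually_ne hq1] with n hn
  exact (geom_sum_eq hn _).symm

theorem tendsto_exp_div_natCast (c : ℝ) : Tendsto (fun N : ℕ => exp (c / N)) atTop (𝓝 1) := by
  simpa [Function.comp_def] using
    (continuous_exp.tendsto 0).comp (tendsto_const_div_atTop_nhds_zero_nat c)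

theorem tendsto_succ_mul_exp_div_sub_one (c : ℝ) :
    Tendsto (fun N : ℕ => ((N : ℝ) + 1) * (exp (c / N) - 1)) atTop (𝓝 c) := by
  have hslope := ((hasDerivAt_id' (0 : ℝ)).const_mul c).exp.tendsto_slope_zero_right
  have hinv : Tendsto (fun N : ℕ => (N : ℝ)⁻¹) atTop (𝓝[>] 0) :=
    tendsto_inv_atTop_nhdsGT_zero.comp tendsto_natCast_atTop_atTop
  have hmain : Tendsto (fun N : ℕ => (N : ℝ) * (exp (c / N) - 1)) atTop (𝓝 c) := by
    simpa [Function.comp_def, div_eq_mul_inv] using hslope.comp hinv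
  simpa [add_mul] using hmain.add ((tendsto_exp_div_natCast c).sub_const 1)

theorem omega_total_sum_limit_general (ρ T κ : ℝ)
    (hκ : 1/2 < κ) :
    Tendsto (fun N : ℕ =>
      ∑ i ∈ Finset.Icc 1 (N+1),
        ((1 - Real.exp (-ρ*T/N))*κ
            + Real.exp (-ρ*T/N)*(Real.exp (-ρ*T/N)*(κ-1)/κ)^(N+1-i))
          / (κ*(κ - Real.exp (-ρ*T/N)*(κ-1))))
      atTop (nhds (ρ*T+1)) := by
  have hκ0 : 0 < κ := by linarith
  have hq : |(κ - 1) / κ| < 1 := by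
    rw [abs_div, abs_of_pos hκ0, div_lt_one hκ0, abs_lt]
    constructor <;> linarith
  have hα := tendsto_exp_div_natCast (-ρ * T)
  have hlin : Tendsto (fun N : ℕ => ((N : ℝ) + 1) * ((1 - exp (-ρ * T / N)) * κ)) atTop
      (𝓝 (ρ * T * κ)) := by
    convert (tendsto_succ_mul_exp_div_sub_one (-ρ * T)).mul_const (-κ) using 1
    · ext N
      ring
    · congr 1
      ring
  have hratio : Tendsto (fun N : ℕ => exp (-ρ * T / N) * (κ - 1) / κ) atTop (𝓝 ((κ - 1) / κ)) := by
    simpa only [one_mul] using (hα.mul_const (κ - 1)).div_const κ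
  have hgeom := tendsto_geom_sum_of_tendsto hratio hq
  have hden : Tendsto (fun N : ℕ => κ * (κ - exp (-ρ * T / N) * (κ - 1))) atTop (𝓝 κ) := by
    simpa only [one_mul, sub_sub_cancel, mul_one] using
      ((tendsto_const_nhds (x := κ)).sub (hα.mul_const (κ - 1))).const_mul κ
  have hval : (ρ * T * κ + 1 * (1 - (κ - 1) / κ)⁻¹) / κ = ρ * T + 1 := by
    field_simp
    ring
  simp_rw [sum_Icc_const_add_mul_pow_div, ← hval]
  exact (hlin.add (hα.mul hgeom)).div hden hκ0.ne'

theorem omega_total_sum_limit (ρ T κ : ℝ)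
    (hρ : 0 < ρ) (hT : 0 < T) (hκ : 1/2 < κ) :
    Tendsto (fun N : ℕ =>
      ∑ i ∈ Finset.Icc 1 (N+1),
        ((1 - Real.exp (-ρ*T/N))*κ
            + Real.exp (-ρ*T/N)*(Real.exp (-ρ*T/N)*(κ-1)/κ)^(N+1-i))
          / (κ*(κ - Real.exp (-ρ*T/N)*(κ-1))))
      atTop (nhds (ρ*T+1)) :=
  omega_total_sum_limit_general ρ T κ hκ
end

section
/- Let ρ, T > 0 and α_N = e^{-ρT/N}. With κ = 1/2, define ω-partial sums S_n^{(N)} = 2[ n(1 - 2α_N/(1+α_N)) + (-1)^{N+1} · 2 α_N^{N+2-n}((-1)^n - α_N^n)/(1+α_N)^2 ]. Then the total sum S_{N+1}^{(N)} converges to e^{-ρT} + ρT + 1 along even N and to -e^{-ρT} + ρT + 1 along odd N. -/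
/-!
With `a = exp (x / n)` one has `a → 1`, `a ^ (n + 1) → exp x` and `(n + 1) (1 - a) → -x`,
the last because `|exp y - 1 - y| ≤ y ^ 2` makes `n (exp (x / n) - 1) - x = O(1 / n)`. Since
`1 - 2a / (1 + a) = (1 - a) / (1 + a)`, the total sum tends to `-x + ε (ε - exp x)`, where
`ε = (-1) ^ (N + 1)` is constant along each parity class of `N`; here `x = -ρT`.
-/

open Real Filter Topology

theorem tendsto_exp_div_nat (x : ℝ) : Tendsto (fun n : ℕ => exp (x / n)) atTop (𝓝 1) := by
  simpa [Function.comp_def] using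
    (continuous_exp.tendsto 0).comp (tendsto_const_div_atTop_nhds_zero_nat x)

theorem tendsto_exp_div_nat_pow_succ (x : ℝ) :
    Tendsto (fun n : ℕ => exp (x / n) ^ (n + 1)) atTop (𝓝 (exp x)) := by
  have h := (tendsto_exp_div_nat x).const_mul (exp x)
  rw [mul_one] at h
  refine h.congr' ?_
  filter_upwards [eventually_ne_atTop 0] with n hn
  rw [pow_succ, ← exp_nat_mul, mul_div_cancel₀ x (Nat.cast_ne_zero.mpr hn), mul_comm]

theorem abs_nat_mul_exp_div_nat_sub_one_sub_le (x : ℝ) {n : ℕ} (hn : |x| ≤ n) :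
    |n * (exp (x / n) - 1) - x| ≤ x ^ 2 / n := by
  rcases (Nat.cast_nonneg (α := ℝ) n).eq_or_lt with h0 | hpos
  · rw [← h0] at hn ⊢; simp [abs_nonpos_iff.mp hn]
  have hdiv : |x / n| ≤ 1 := by rwa [abs_div, Nat.abs_cast, div_le_one hpos]
  calc |n * (exp (x / n) - 1) - x| = n * |exp (x / n) - 1 - x / n| := by
        rw [← abs_of_pos hpos, ← abs_mul, abs_of_pos hpos, mul_sub (n : ℝ) _ (x / n),
          mul_div_cancel₀ x hpos.ne']
    _ ≤ n * (x / n) ^ 2 := by gcongr; exact abs_exp_sub_one_sub_id_le hdiv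
    _ = x ^ 2 / n := by field_simp

theorem tendsto_nat_mul_exp_div_nat_sub_one (x : ℝ) :
    Tendsto (fun n : ℕ => n * (exp (x / n) - 1)) atTop (𝓝 x) := by
  rw [tendsto_iff_norm_sub_tendsto_zero]
  refine squeeze_zero' (Eventually.of_forall fun n => norm_nonneg _) ?_
    (tendsto_const_div_atTop_nhds_zero_nat (x ^ 2))
  filter_upwards [(tendsto_natCast_atTop_atTop (R := ℝ)).eventually_ge_atTop |x|] with n hn
  exact abs_nat_mul_exp_div_nat_sub_one_sub_le x hn

theorem tendsto_succ_mul_one_sub_exp_div_nat (x : ℝ) :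
    Tendsto (fun n : ℕ => ((n : ℝ) + 1) * (1 - exp (x / n))) atTop (𝓝 (-x)) := by
  have h := ((tendsto_nat_mul_exp_div_nat_sub_one x).add
    ((tendsto_exp_div_nat x).sub_const 1)).neg
  rw [sub_self, add_zero] at h
  exact h.congr fun n => by ring

theorem tendsto_omega_sum_of_tendsto {ι : Type*} {l : Filter ι} {a b m : ι → ℝ} {ℓ L : ℝ}
    (ε : ℝ) (ha : Tendsto a l (𝓝 1)) (hb : Tendsto b l (𝓝 L))
    (hm : Tendsto (fun i => m i * (1 - a i)) l (𝓝 ℓ)) :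
    Tendsto (fun i => 2 * (m i * (1 - 2 * a i / (1 + a i))
        + ε * 2 * a i * (ε - b i) / (1 + a i) ^ 2)) l (𝓝 (ℓ + ε * (ε - L))) := by
  have hsum : Tendsto (fun i => 1 + a i) l (𝓝 2) := by
    simpa [one_add_one_eq_two] using ha.const_add 1
  have h := ((hm.div hsum two_ne_zero).add
    (((ha.const_mul (ε * 2)).mul (hb.const_sub ε)).div (hsum.pow 2) (by norm_num))).const_mul 2
  convert h.congr' ?_ using 2
  · ring
  filter_upwards [hsum.eventually_ne two_ne_zero] with i hi
  simp only [Pi.div_apply]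
  field_simp
  ring

theorem omega_sum_two_accumulation_points_general (ρ T : ℝ)
    (S : ℕ → ℝ)
    (hS : ∀ N : ℕ,
      S N = 2*(((N : ℝ)+1)*(1 - 2*Real.exp (-ρ*T/N)/(1+Real.exp (-ρ*T/N)))
        + (-1:ℝ)^(N+1) * 2*(Real.exp (-ρ*T/N))^(N+2-(N+1))
            * ((-1:ℝ)^(N+1) - (Real.exp (-ρ*T/N))^(N+1))
            / (1+Real.exp (-ρ*T/N))^2)) :
    Tendsto (fun N : ℕ => S (2*N)) atTop (nhds (Real.exp (-ρ*T) + ρ*T + 1)) ∧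
    Tendsto (fun N : ℕ => S (2*N+1)) atTop (nhds (-Real.exp (-ρ*T) + ρ*T + 1)) := by
  have along (ε : ℝ) {φ : ℕ → ℕ} (hφ : Tendsto φ atTop atTop)
      (hε : ∀ N, (-1 : ℝ) ^ (φ N + 1) = ε) :
      Tendsto (fun N => S (φ N)) atTop (𝓝 (-(-ρ * T) + ε * (ε - exp (-ρ * T)))) := by
    refine (tendsto_omega_sum_of_tendsto ε ((tendsto_exp_div_nat _).comp hφ)
      ((tendsto_exp_div_nat_pow_succ _).comp hφ)
      ((tendsto_succ_mul_one_sub_exp_div_nat _).comp hφ)).congr fun N => ?_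
    simp only [Function.comp, hS, hε, show φ N + 2 - (φ N + 1) = 1 by omega, pow_one]
  constructor
  · convert along (-1) (φ := (2 * ·))
      (tendsto_atTop_mono (fun n => show n ≤ 2 * n by omega) tendsto_id)
      (fun N => (odd_two_mul_add_one N).neg_one_pow) using 2
    ring
  · convert along 1 (φ := (2 * · + 1))
      (tendsto_atTop_mono (fun n => show n ≤ 2 * n + 1 by omega) tendsto_id)
      (fun N => Even.neg_one_pow ⟨N + 1, by ring⟩) using 2
    ring

theorem omega_sum_two_accumulation_points (ρ T : ℝ)
    (hρ : 0 < ρ) (hT : 0 < T)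
    (S : ℕ → ℝ)
    (hS : ∀ N : ℕ,
      S N = 2*(((N : ℝ)+1)*(1 - 2*Real.exp (-ρ*T/N)/(1+Real.exp (-ρ*T/N)))
        + (-1:ℝ)^(N+1) * 2*(Real.exp (-ρ*T/N))^(N+2-(N+1))
            * ((-1:ℝ)^(N+1) - (Real.exp (-ρ*T/N))^(N+1))
            / (1+Real.exp (-ρ*T/N))^2)) :
    Tendsto (fun N : ℕ => S (2*N)) atTop (nhds (Real.exp (-ρ*T) + ρ*T + 1)) ∧
    Tendsto (fun N : ℕ => S (2*N+1)) atTop (nhds (-Real.exp (-ρ*T) + ρ*T + 1)) :=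
  omega_sum_two_accumulation_points_general ρ T S hS
end

section
/- Let ρ, T > 0, α_N = e^{-ρT/N}, and fix t ∈ (0,T], n_t = ⌈Nt/T⌉. With ν_i^{(N)} defined by ν_1 = (1/(2+α))(1 + ((2-α^2)/2)(α/(2-α^2))^{N+1}) and ν_i = (1/(2+α))(1-α + (1-α^2)(α/(2-α^2))^{N+2-i}) for i ≥ 2 (α = α_N), one has ∑_{i=1}^{n_t} ν_i^{(N)} → (e^{-3ρT}(4e^{3ρt} - 1) + 6(ρt + 1))/18 as N → ∞. -/
/-!
Splitting off `ν₁`, the remaining terms are an arithmetic part `(1 - α) / (2 + α)` plus a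
geometric series in `β = α / (2 - α²)`, which gives a closed form for the partial sum.
If `k (1 - α) → c` then `α ^ k → e^{-c}` and `(2 - α²) ^ k → e^{2c}` (both are `(1 + y) ^ k` with
`k y` convergent), so `β ^ k → e^{-3c}`. Since `N (1 - α_N) → ρT` and `n_t (1 - α_N) → ρt`, this
gives `β^{N+1} → e^{-3ρT}` and `β^{N+2-n_t} → e^{-3ρ(T-t)}`, and the closed form converges.
-/

open Real Filter Topology Asymptotics Finset

section Limits

variable {ι : Type*} {l : Filter ι}

theorem HasDerivAt.tendsto_mul_comp {f : ℝ → ℝ} {d : ℝ} (hf : HasDerivAt f d 0) (hf0 : f 0 = 0)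
    {k x : ι → ℝ} {c : ℝ} (hx : Tendsto x l (𝓝 0))
    (hkx : Tendsto (fun i => k i * x i) l (𝓝 c)) :
    Tendsto (fun i => k i * f (x i)) l (𝓝 (d * c)) := by
  have hlin : (fun i => f (x i) - d * x i) =o[l] x := by
    have h := (hasDerivAt_iff_isLittleO.mp hf).comp_tendsto hx
    simpa [Function.comp_def, hf0, mul_comm] using h
  have herr : Tendsto (fun i => k i * (f (x i) - d * x i)) l (𝓝 0) :=
    (isLittleO_one_iff ℝ).mp
      (((isBigO_refl k l).mul_isLittleO hlin).trans_isBigO (hkx.isBigO_one ℝ))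
  simpa [mul_sub, mul_left_comm] using herr.add (hkx.const_mul d)

theorem tendsto_mul_one_sub_exp_neg {k x : ι → ℝ} {c : ℝ} (hx : Tendsto x l (𝓝 0))
    (hkx : Tendsto (fun i => k i * x i) l (𝓝 c)) :
    Tendsto (fun i => k i * (1 - exp (-x i))) l (𝓝 c) := by
  have hf : HasDerivAt (fun y => 1 - exp (-y)) 1 0 := by
    simpa using ((hasDerivAt_neg 0).exp).const_sub 1
  simpa using hf.tendsto_mul_comp (by simp) hx hkx

theorem tendsto_one_add_pow_exp_of_tendsto_mul {y : ι → ℝ} {m : ι → ℕ} {c : ℝ}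
    (hy : Tendsto y l (𝓝 0)) (hmy : Tendsto (fun i => (m i : ℝ) * y i) l (𝓝 c)) :
    Tendsto (fun i => (1 + y i) ^ m i) l (𝓝 (exp c)) := by
  have hf : HasDerivAt (fun z => log (1 + z)) 1 0 := by
    simpa using ((hasDerivAt_id (0 : ℝ)).const_add 1).log (by norm_num)
  have hlog := one_mul c ▸ hf.tendsto_mul_comp (by simp) hy hmy
  refine ((continuous_exp.tendsto _).comp hlog).congr' ?_
  filter_upwards [hy.eventually (lt_mem_nhds (show (-1 : ℝ) < 0 by norm_num))] with i hi
  rw [Function.comp_apply, exp_nat_mul, exp_log (by linarith)]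

theorem tendsto_div_two_sub_sq_pow {a : ι → ℝ} {m : ι → ℕ} {c : ℝ} (ha : Tendsto a l (𝓝 1))
    (hm : Tendsto (fun i => (m i : ℝ) * (1 - a i)) l (𝓝 c)) :
    Tendsto (fun i => (a i / (2 - a i ^ 2)) ^ m i) l (𝓝 (exp (-3 * c))) := by
  have hy : Tendsto (fun i => 1 - a i) l (𝓝 0) := by
    simpa using (tendsto_const_nhds (x := (1 : ℝ))).sub ha
  have hnum : Tendsto (fun i => (1 + -(1 - a i)) ^ m i) l (𝓝 (exp (-c))) :=
    tendsto_one_add_pow_exp_of_tendsto_mul (by simpa using hy.neg) (hm.neg.congr fun i => by ring)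
  have hden : Tendsto (fun i => (1 + (1 - a i) * (1 + a i)) ^ m i) l (𝓝 (exp (c * 2))) := by
    refine tendsto_one_add_pow_exp_of_tendsto_mul
      (by simpa using hy.mul (tendsto_const_nhds.add ha)) ?_
    simpa only [mul_assoc, one_add_one_eq_two] using
      hm.mul ((tendsto_const_nhds (x := (1 : ℝ))).add ha)
  convert hnum.div hden (exp_pos _).ne' using 1
  · ext i
    rw [div_pow]
    congr 2 <;> ring
  · rw [← exp_sub]
    ring_nf

end Limits

theorem geom_sum_Ioc_one_reflect {K : Type*} [DivisionRing K] {x : K} (hx : x ≠ 1) {n m : ℕ}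
    (hn : 1 ≤ n) (hnm : n ≤ m) :
    ∑ i ∈ Ioc 1 n, x ^ (m + 1 - i) = (x ^ (m + 1 - n) - x ^ m) / (1 - x) := by
  rw [← Ico_add_one_add_one_eq_Ioc, sum_Ico_reflect _ _ (by omega),
    show m + 1 + 1 - (n + 1) = m + 1 - n by omega, show m + 1 + 1 - (1 + 1) = m by omega,
    geom_sum_Ico' hx (by omega)]

theorem sum_Icc_one_eq {a : ℝ} (h2a : 2 + a ≠ 0) (h2a2 : 2 - a ^ 2 ≠ 0) {N n : ℕ}
    (hn : 1 ≤ n) (hnN : n ≤ N + 1) {ν : ℕ → ℝ}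
    (hν1 : ν 1 = 1 / (2 + a) * (1 + (2 - a ^ 2) / 2 * (a / (2 - a ^ 2)) ^ (N + 1)))
    (hνi : ∀ i, 2 ≤ i →
      ν i = 1 / (2 + a) * (1 - a + (1 - a ^ 2) * (a / (2 - a ^ 2)) ^ (N + 2 - i))) :
    ∑ i ∈ Icc 1 n, ν i = (1 + (2 - a ^ 2) / 2 * (a / (2 - a ^ 2)) ^ (N + 1) + (n - 1) * (1 - a)
      + (1 + a) * (2 - a ^ 2) / (2 + a)
        * ((a / (2 - a ^ 2)) ^ (N + 2 - n) - (a / (2 - a ^ 2)) ^ (N + 1))) / (2 + a) := by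
  rw [← add_sum_Ioc_eq_sum_Icc hn, hν1, sum_congr rfl fun i hi => hνi i (mem_Ioc.mp hi).1,
    ← mul_sum, sum_add_distrib, sum_const, Nat.card_Ioc, nsmul_eq_mul, Nat.cast_sub hn, ← mul_sum]
  rcases eq_or_ne a 1 with rfl | ha1
  · norm_num
  have hβ : a / (2 - a ^ 2) ≠ 1 := by
    rw [Ne, div_eq_one_iff_eq h2a2]
    intro h
    have : (a - 1) * (2 + a) = 0 := by linear_combination h
    rcases mul_eq_zero.mp this with h | h
    · exact ha1 (sub_eq_zero.mp h)
    · exact h2a h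
  have h1β : 1 - a / (2 - a ^ 2) = (1 - a) * (2 + a) / (2 - a ^ 2) := by
    field_simp
    ring
  rw [geom_sum_Ioc_one_reflect hβ (m := N + 1) hn hnN, h1β]
  have h1a : 1 - a ≠ 0 := sub_ne_zero.mpr (Ne.symm ha1)
  field_simp
  ring

theorem tendsto_sum_Icc_of_tendsto_mul_one_sub {a : ℕ → ℝ} {n : ℕ → ℕ} {C c : ℝ}
    (hNa : Tendsto (fun N : ℕ => (N : ℝ) * (1 - a N)) atTop (𝓝 C))
    (hna : Tendsto (fun N => (n N : ℝ) * (1 - a N)) atTop (𝓝 c))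
    (hn : ∀ᶠ N in atTop, 1 ≤ n N ∧ n N ≤ N + 1) (ν : ℕ → ℕ → ℝ)
    (hν1 : ∀ N,
      ν N 1 = 1 / (2 + a N) * (1 + (2 - a N ^ 2) / 2 * (a N / (2 - a N ^ 2)) ^ (N + 1)))
    (hνi : ∀ N i, 2 ≤ i →
      ν N i = 1 / (2 + a N) * (1 - a N + (1 - a N ^ 2) * (a N / (2 - a N ^ 2)) ^ (N + 2 - i))) :
    Tendsto (fun N => ∑ i ∈ Icc 1 (n N), ν N i) atTop
      (𝓝 ((1 + exp (-3 * C) / 2 + c + 2 / 3 * (exp (-3 * (C - c)) - exp (-3 * C))) / 3)) := by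
  have hy : Tendsto (fun N => 1 - a N) atTop (𝓝 0) := by
    refine (mul_zero C ▸ hNa.mul tendsto_one_div_atTop_nhds_zero_nat).congr' ?_
    filter_upwards [eventually_ne_atTop 0] with N hN
    field_simp
  have ha : Tendsto a atTop (𝓝 1) := by
    simpa using (tendsto_const_nhds (x := (1 : ℝ))).sub hy
  have hp := tendsto_div_two_sub_sq_pow ha (m := fun N => N + 1) (c := C) <| by
    simpa [add_mul] using hNa.add hy
  have hq := tendsto_div_two_sub_sq_pow ha (m := fun N => N + 2 - n N) (c := C - c) <| by
    convert ((hNa.add (hy.const_mul 2)).sub hna).congr' ?_ using 2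
    · ring
    filter_upwards [hn] with N hN
    rw [Nat.cast_sub (by omega)]
    push_cast
    ring
  have hr : Tendsto (fun N => ((n N : ℝ) - 1) * (1 - a N)) atTop (𝓝 c) := by
    simpa [sub_mul] using hna.sub hy
  have h2a : Tendsto (fun N => 2 + a N) atTop (𝓝 3) := by
    convert (tendsto_const_nhds (x := (2 : ℝ))).add ha
    norm_num
  have h2a2 : Tendsto (fun N => 2 - a N ^ 2) atTop (𝓝 1) := by
    convert (tendsto_const_nhds (x := (2 : ℝ))).sub (ha.pow 2)
    norm_num
  have h1a : Tendsto (fun N => 1 + a N) atTop (𝓝 (1 + 1)) := tendsto_const_nhds.add ha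
  have hlim := ((((tendsto_const_nhds (x := (1 : ℝ))).add ((h2a2.div_const 2).mul hp)).add
    hr).add ((h1a.mul h2a2).div h2a (by norm_num) |>.mul (hq.sub hp))).div h2a (by norm_num)
  convert hlim.congr' ?_ using 2
  · ring
  filter_upwards [hn, h2a.eventually_ne three_ne_zero, h2a2.eventually_ne one_ne_zero]
    with N hN h2aN h2a2N
  exact (sum_Icc_one_eq h2aN h2a2N hN.1 hN.2 (hν1 N) (hνi N)).symm

theorem tendsto_natCeil_mul_one_sub_exp_neg {ρ T t : ℝ} (hT : 0 < T) (ht : 0 ≤ t) :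
    Tendsto (fun N : ℕ => (⌈(N : ℝ) * t / T⌉₊ : ℝ) * (1 - exp (-(ρ * T / N)))) atTop
      (𝓝 (ρ * t)) := by
  refine tendsto_mul_one_sub_exp_neg (tendsto_const_div_atTop_nhds_zero_nat _) ?_
  have h := ((tendsto_nat_ceil_mul_div_atTop (div_nonneg ht hT.le)).comp
    tendsto_natCast_atTop_atTop).mul_const (ρ * T)
  convert h using 2 with N
  · rw [Function.comp_apply, show t / T * N = N * t / T by ring]
    ring
  · field_simp

theorem nu_partial_sum_limit_kappa_one_general (ρ T t : ℝ)
    (hT : 0 < T) (ht : t ∈ Set.Ioc 0 T)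
    (ν : ℕ → ℕ → ℝ)
    (hν1 : ∀ N : ℕ,
      ν N 1 = (1/(2+Real.exp (-ρ*T/N)))
        * (1 + ((2-(Real.exp (-ρ*T/N))^2)/2)
            * (Real.exp (-ρ*T/N)/(2-(Real.exp (-ρ*T/N))^2))^(N+1)))
    (hνi : ∀ N i, 2 ≤ i →
      ν N i = (1/(2+Real.exp (-ρ*T/N)))
        * (1 - Real.exp (-ρ*T/N) + (1-(Real.exp (-ρ*T/N))^2)
            * (Real.exp (-ρ*T/N)/(2-(Real.exp (-ρ*T/N))^2))^(N+2-i))) :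
    Tendsto (fun N : ℕ => ∑ i ∈ Finset.Icc 1 (⌈(N : ℝ)*t/T⌉₊), ν N i)
      atTop (nhds ((Real.exp (-3*ρ*T)*(4*Real.exp (3*ρ*t) - 1) + 6*(ρ*t+1))/18)) := by
  obtain ⟨ht0, htT⟩ := ht
  simp only [neg_mul, neg_div] at hν1 hνi
  have hNa : Tendsto (fun N : ℕ => (N : ℝ) * (1 - exp (-(ρ * T / N)))) atTop (𝓝 (ρ * T)) := by
    simpa [hT.ne'] using tendsto_natCeil_mul_one_sub_exp_neg (ρ := ρ) hT hT.le
  have hn : ∀ᶠ N : ℕ in atTop, 1 ≤ ⌈(N : ℝ) * t / T⌉₊ ∧ ⌈(N : ℝ) * t / T⌉₊ ≤ N + 1 := by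
    filter_upwards [eventually_ge_atTop 1] with N hN
    refine ⟨Nat.one_le_ceil_iff.mpr (by positivity), Nat.ceil_le.mpr ?_⟩
    rw [div_le_iff₀ hT]
    push_cast
    nlinarith
  convert tendsto_sum_Icc_of_tendsto_mul_one_sub hNa
    (tendsto_natCeil_mul_one_sub_exp_neg hT ht0.le) hn ν hν1 hνi using 2
  rw [show -3 * (ρ * T - ρ * t) = -3 * ρ * T + 3 * ρ * t by ring, exp_add, ← mul_assoc]
  ring

theorem nu_partial_sum_limit_kappa_one (ρ T t : ℝ)
    (hρ : 0 < ρ) (hT : 0 < T) (ht : t ∈ Set.Ioc 0 T)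
    (ν : ℕ → ℕ → ℝ)
    (hν1 : ∀ N : ℕ,
      ν N 1 = (1/(2+Real.exp (-ρ*T/N)))
        * (1 + ((2-(Real.exp (-ρ*T/N))^2)/2)
            * (Real.exp (-ρ*T/N)/(2-(Real.exp (-ρ*T/N))^2))^(N+1)))
    (hνi : ∀ N i, 2 ≤ i →
      ν N i = (1/(2+Real.exp (-ρ*T/N)))
        * (1 - Real.exp (-ρ*T/N) + (1-(Real.exp (-ρ*T/N))^2)
            * (Real.exp (-ρ*T/N)/(2-(Real.exp (-ρ*T/N))^2))^(N+2-i))) :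
    Tendsto (fun N : ℕ => ∑ i ∈ Finset.Icc 1 (⌈(N : ℝ)*t/T⌉₊), ν N i)
      atTop (nhds ((Real.exp (-3*ρ*T)*(4*Real.exp (3*ρ*t) - 1) + 6*(ρ*t+1))/18)) :=
  nu_partial_sum_limit_kappa_one_general ρ T t hT ht ν hν1 hνi
end

section
/- Let T > 0, ρ > 0, θ ≥ 0, and let Y be a fixed right-continuous function of bounded variation on [0,T]. Then the cost functional X ↦ (1/2)∫∫ e^{-ρ|t-s|} dX_s dX_t + ∫_{[0,T]}∫_{[0,t)} e^{-ρ(t-s)} dY_s dX_t + (1/2)∑_t ΔX_t ΔY_t + θ ∑_t (ΔX_t)^2 is strictly convex on the affine space of right-continuous bounded-variation functions X on [0,T] with X_{0-} = x and X_T = 0. In particular, for distinct X^0, X^1 in this space, ∫∫ e^{-ρ|t-s|} d(X^1 - X^0)_s d(X^1 - X^0)_t > 0. -/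
/-!
The cost is a quadratic form in `X` plus terms affine in `X`, so its convexity defect at weight
`α` is `α(1-α)((1/2) Q(μ) + θ J(μ))` for the difference `μ = dX¹ - dX⁰`, where `Q` is the
`e^{-ρ|t-s|}` form and `J(μ) = ∑ₜ μ{t}²` the jump form. Strict positivity of `Q` comes from the
factorization `e^{-ρ|t-s|} = 2ρ ∫ k(t,u) k(s,u) du` through the causal kernel
`k(t,u) = e^{-ρ(t-u)} 1_{u<t}`, which gives `Q(μ) = 2ρ ∫ (∫ k(t,u) dμ(t))² du`. The inner integral
`e^{ρu} ∫_{(u,∞)} e^{-ρt} dμ(t)` is right-continuous in `u`, so if `Q(μ) = 0` it vanishes for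
every `u`, and then `μ = 0`.
-/

open Real MeasureTheory

/-- Iterated integral of a kernel `K` against a pair of (finite) measures:
`∫∫ K t s db(s) da(t)` (outer measure `a` in the variable `t`, inner `b` in `s`). -/
noncomputable def doubleInt (K : ℝ → ℝ → ℝ) (a b : Measure ℝ) : ℝ :=
  ∫ t, (∫ s, K t s ∂b) ∂a

/-- The bilinear extension of `doubleInt` to "signed measures" represented by their
Jordan pairs: the strategy `X` has Stieltjes measure `p - m`, the strategy `Y` has
Stieltjes measure `q - n`; this computes `∫∫ K t s d(q-n)(s) d(p-m)(t)`. -/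
noncomputable def bilinInt (K : ℝ → ℝ → ℝ) (p m q n : Measure ℝ) : ℝ :=
  doubleInt K p q - doubleInt K p n - doubleInt K m q + doubleInt K m n

/-- The expected cost functional
`C(X|Y) = (1/2)∫∫ e^{-ρ|t-s|} dX dX + ∫_{[0,T]}∫_{[0,t)} e^{-ρ(t-s)} dY_s dX_t
  + (1/2)∑_t ΔX_t ΔY_t + θ ∑_t (ΔX_t)²`,
where the strategies `X` and `Y` are encoded by the Jordan pairs `(Xp, Xm)` and
`(Yp, Ym)` of their Stieltjes measures; the two jump sums are the double integrals
against the diagonal kernel. -/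
noncomputable def liqCost (ρ θ : ℝ) (Xp Xm Yp Ym : Measure ℝ) : ℝ :=
  (1/2) * bilinInt (fun t s => Real.exp (-ρ*|t-s|)) Xp Xm Xp Xm
    + bilinInt (fun t s => if s < t then Real.exp (-ρ*(t-s)) else 0) Xp Xm Yp Ym
    + (1/2) * bilinInt (fun t s => if s = t then 1 else 0) Xp Xm Yp Ym
    + θ * bilinInt (fun t s => if s = t then 1 else 0) Xp Xm Xp Xm

open Set Function Topology
open scoped ENNReal

namespace LiquidationCost

structure IsBoundedKernel (K : ℝ → ℝ → ℝ) : Prop where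
  measurable : Measurable (uncurry K)
  bounded : ∃ C, ∀ t s, |K t s| ≤ C

instance isFiniteMeasure_ofReal_smul (r : ℝ) (μ : Measure ℝ) [IsFiniteMeasure μ] :
    IsFiniteMeasure (ENNReal.ofReal r • μ) :=
  μ.smul_finite ENNReal.ofReal_ne_top

variable {K : ℝ → ℝ → ℝ}

theorem doubleInt_smul_left (c : ℝ≥0∞) (a b : Measure ℝ) :
    doubleInt K (c • a) b = c.toReal * doubleInt K a b := by
  simp only [doubleInt, integral_smul_measure, smul_eq_mul]

theorem doubleInt_smul_right (c : ℝ≥0∞) (a b : Measure ℝ) :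
    doubleInt K a (c • b) = c.toReal * doubleInt K a b := by
  simp only [doubleInt, integral_smul_measure, smul_eq_mul, integral_const_mul]

namespace IsBoundedKernel

variable (hK : IsBoundedKernel K)
include hK

theorem integrable_apply (t : ℝ) (b : Measure ℝ) [IsFiniteMeasure b] : Integrable (K t) b := by
  obtain ⟨C, hC⟩ := hK.bounded
  exact .of_bound (hK.measurable.comp measurable_prodMk_left).aestronglyMeasurable C
    (.of_forall (hC t))

theorem integrable_integral (a b : Measure ℝ) [IsFiniteMeasure a] [IsFiniteMeasure b] :
    Integrable (fun t => ∫ s, K t s ∂b) a := by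
  obtain ⟨C, hC⟩ := hK.bounded
  exact .of_bound hK.measurable.stronglyMeasurable.integral_prod_right'.aestronglyMeasurable
    (C * b.real univ) (.of_forall fun t => norm_integral_le_of_norm_le_const (.of_forall (hC t)))

theorem doubleInt_add_left (a a' b : Measure ℝ) [IsFiniteMeasure a] [IsFiniteMeasure a']
    [IsFiniteMeasure b] : doubleInt K (a + a') b = doubleInt K a b + doubleInt K a' b :=
  integral_add_measure (hK.integrable_integral a b) (hK.integrable_integral a' b)

theorem doubleInt_add_right (a b b' : Measure ℝ) [IsFiniteMeasure a] [IsFiniteMeasure b]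
    [IsFiniteMeasure b'] : doubleInt K a (b + b') = doubleInt K a b + doubleInt K a b' := by
  rw [doubleInt, doubleInt, doubleInt,
    ← integral_add (hK.integrable_integral a b) (hK.integrable_integral a b')]
  exact integral_congr_ae (.of_forall fun t =>
    integral_add_measure (hK.integrable_apply t b) (hK.integrable_apply t b'))

variable {α : ℝ} (h₀ : 0 ≤ α) (h₁ : α ≤ 1)
include h₀ h₁

theorem bilinInt_convexComb_left (p₁ m₁ p₀ m₀ q n : Measure ℝ) [IsFiniteMeasure p₁]
    [IsFiniteMeasure m₁] [IsFiniteMeasure p₀] [IsFiniteMeasure m₀] [IsFiniteMeasure q]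
    [IsFiniteMeasure n] :
    bilinInt K (ENNReal.ofReal α • p₁ + ENNReal.ofReal (1 - α) • p₀)
        (ENNReal.ofReal α • m₁ + ENNReal.ofReal (1 - α) • m₀) q n
      = α * bilinInt K p₁ m₁ q n + (1 - α) * bilinInt K p₀ m₀ q n := by
  simp only [bilinInt, hK.doubleInt_add_left, doubleInt_smul_left, ENNReal.toReal_ofReal h₀,
    ENNReal.toReal_ofReal (sub_nonneg.mpr h₁)]
  ring

theorem bilinInt_convexComb_right (p m q₁ n₁ q₀ n₀ : Measure ℝ) [IsFiniteMeasure p]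
    [IsFiniteMeasure m] [IsFiniteMeasure q₁] [IsFiniteMeasure n₁] [IsFiniteMeasure q₀]
    [IsFiniteMeasure n₀] :
    bilinInt K p m (ENNReal.ofReal α • q₁ + ENNReal.ofReal (1 - α) • q₀)
        (ENNReal.ofReal α • n₁ + ENNReal.ofReal (1 - α) • n₀)
      = α * bilinInt K p m q₁ n₁ + (1 - α) * bilinInt K p m q₀ n₀ := by
  simp only [bilinInt, hK.doubleInt_add_right, doubleInt_smul_right, ENNReal.toReal_ofReal h₀,
    ENNReal.toReal_ofReal (sub_nonneg.mpr h₁)]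
  ring

omit h₀ h₁ in
theorem bilinInt_sub_self (p₁ m₁ p₀ m₀ : Measure ℝ) [IsFiniteMeasure p₁] [IsFiniteMeasure m₁]
    [IsFiniteMeasure p₀] [IsFiniteMeasure m₀] :
    bilinInt K (p₁ + m₀) (p₀ + m₁) (p₁ + m₀) (p₀ + m₁)
      = bilinInt K p₁ m₁ p₁ m₁ - bilinInt K p₁ m₁ p₀ m₀ - bilinInt K p₀ m₀ p₁ m₁
        + bilinInt K p₀ m₀ p₀ m₀ := by
  simp only [bilinInt, hK.doubleInt_add_left, hK.doubleInt_add_right]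
  ring

theorem bilinInt_convexComb_self (p₁ m₁ p₀ m₀ : Measure ℝ) [IsFiniteMeasure p₁]
    [IsFiniteMeasure m₁] [IsFiniteMeasure p₀] [IsFiniteMeasure m₀] :
    bilinInt K (ENNReal.ofReal α • p₁ + ENNReal.ofReal (1 - α) • p₀)
        (ENNReal.ofReal α • m₁ + ENNReal.ofReal (1 - α) • m₀)
        (ENNReal.ofReal α • p₁ + ENNReal.ofReal (1 - α) • p₀)
        (ENNReal.ofReal α • m₁ + ENNReal.ofReal (1 - α) • m₀)
      = α * bilinInt K p₁ m₁ p₁ m₁ + (1 - α) * bilinInt K p₀ m₀ p₀ m₀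
        - α * (1 - α) * bilinInt K (p₁ + m₀) (p₀ + m₁) (p₁ + m₀) (p₀ + m₁) := by
  rw [hK.bilinInt_convexComb_left h₀ h₁, hK.bilinInt_convexComb_right h₀ h₁,
    hK.bilinInt_convexComb_right h₀ h₁, hK.bilinInt_sub_self]
  ring

end IsBoundedKernel

theorem ofReal_doubleInt_eq_lintegral (hK : IsBoundedKernel K) (hK₀ : ∀ t s, 0 ≤ K t s)
    (a b : Measure ℝ) [IsFiniteMeasure a] [IsFiniteMeasure b] :
    ENNReal.ofReal (doubleInt K a b) = ∫⁻ t, ∫⁻ s, ENNReal.ofReal (K t s) ∂b ∂a := by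
  rw [doubleInt, ofReal_integral_eq_lintegral_ofReal (hK.integrable_integral a b)
    (.of_forall fun t => integral_nonneg (hK₀ t))]
  exact lintegral_congr fun t =>
    ofReal_integral_eq_lintegral_ofReal (hK.integrable_apply t b) (.of_forall (hK₀ t))

noncomputable def meanEmbedding {U : Type*} (φ : U → ℝ → ℝ) (a : Measure ℝ) (u : U) : ℝ :=
  ∫ t, φ u t ∂a

structure IsFeatureFactorization {U : Type*} [MeasurableSpace U] (K : ℝ → ℝ → ℝ)
    (ν : Measure U) (φ : U → ℝ → ℝ) : Prop where
  measurable : Measurable (uncurry φ)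
  nonneg : ∀ u t, 0 ≤ φ u t
  bounded : ∃ C, ∀ u t, φ u t ≤ C
  integrable : ∀ t s, Integrable (fun u => φ u t * φ u s) ν
  eq_integral : ∀ t s, K t s = ∫ u, φ u t * φ u s ∂ν

namespace IsFeatureFactorization

variable {U : Type*} [MeasurableSpace U] {ν : Measure U} {φ : U → ℝ → ℝ}
  (hφ : IsFeatureFactorization K ν φ)
include hφ

theorem kernel_nonneg (t s : ℝ) : 0 ≤ K t s :=
  hφ.eq_integral t s ▸ integral_nonneg fun u => mul_nonneg (hφ.nonneg u t) (hφ.nonneg u s)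

theorem integrable_feature (u : U) (a : Measure ℝ) [IsFiniteMeasure a] : Integrable (φ u) a := by
  obtain ⟨C, hC⟩ := hφ.bounded
  refine .of_bound (hφ.measurable.comp measurable_prodMk_left).aestronglyMeasurable C
    (.of_forall fun t => ?_)
  rw [Real.norm_of_nonneg (hφ.nonneg u t)]
  exact hC u t

theorem meanEmbedding_nonneg (a : Measure ℝ) (u : U) : 0 ≤ meanEmbedding φ a u :=
  integral_nonneg (hφ.nonneg u)

theorem measurable_meanEmbedding (a : Measure ℝ) [SFinite a] : Measurable (meanEmbedding φ a) :=
  hφ.measurable.stronglyMeasurable.integral_prod_right'.measurable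

variable [SFinite ν]

theorem lintegral_ofReal_meanEmbedding_mul (hK : IsBoundedKernel K) (a b : Measure ℝ)
    [IsFiniteMeasure a] [IsFiniteMeasure b] :
    ∫⁻ u, ENNReal.ofReal (meanEmbedding φ a u * meanEmbedding φ b u) ∂ν
      = ENNReal.ofReal (doubleInt K a b) := by
  set F : U → ℝ → ℝ≥0∞ := fun u t => ENNReal.ofReal (φ u t)
  have hF : Measurable (uncurry F) := ENNReal.measurable_ofReal.comp hφ.measurable
  have hFu : ∀ u, Measurable (F u) := fun u => hF.comp measurable_prodMk_left
  have hFb : Measurable fun u => ∫⁻ s, F u s ∂b := hF.lintegral_prod_right'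
  have hFa : ∀ u (a : Measure ℝ) [IsFiniteMeasure a],
      ∫⁻ t, F u t ∂a = ENNReal.ofReal (meanEmbedding φ a u) := fun u a _ =>
    (ofReal_integral_eq_lintegral_ofReal (hφ.integrable_feature u a)
      (.of_forall (hφ.nonneg u))).symm
  have hKF : ∀ t s, ENNReal.ofReal (K t s) = ∫⁻ u, F u t * F u s ∂ν := fun t s => by
    rw [hφ.eq_integral, ofReal_integral_eq_lintegral_ofReal (hφ.integrable t s)
      (.of_forall fun u => mul_nonneg (hφ.nonneg u t) (hφ.nonneg u s))]
    exact lintegral_congr fun u => ENNReal.ofReal_mul (hφ.nonneg u t)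
  calc ∫⁻ u, ENNReal.ofReal (meanEmbedding φ a u * meanEmbedding φ b u) ∂ν
      = ∫⁻ u, ∫⁻ t, F u t * ∫⁻ s, F u s ∂b ∂a ∂ν := by
        refine lintegral_congr fun u => ?_
        rw [lintegral_mul_const _ (hFu u), hFa, hFa,
          ENNReal.ofReal_mul (hφ.meanEmbedding_nonneg a u)]
    _ = ∫⁻ t, ∫⁻ u, F u t * ∫⁻ s, F u s ∂b ∂ν ∂a :=
        (lintegral_lintegral_swap ((hF.comp measurable_swap).mul
          (hFb.comp measurable_snd)).aemeasurable).symm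
    _ = ∫⁻ t, ∫⁻ s, ∫⁻ u, F u t * F u s ∂ν ∂b ∂a := by
        refine lintegral_congr fun t => ?_
        rw [lintegral_lintegral_swap (((hF.comp measurable_prodMk_right).comp
          measurable_snd).mul (hF.comp measurable_swap)).aemeasurable]
        exact lintegral_congr fun u => (lintegral_const_mul _ (hFu u)).symm
    _ = ENNReal.ofReal (doubleInt K a b) := by
        simp_rw [← hKF]
        exact (ofReal_doubleInt_eq_lintegral hK hφ.kernel_nonneg a b).symm

variable (hK : IsBoundedKernel K)
include hK

theorem integrable_meanEmbedding_mul (a b : Measure ℝ) [IsFiniteMeasure a] [IsFiniteMeasure b] :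
    Integrable (fun u => meanEmbedding φ a u * meanEmbedding φ b u) ν := by
  refine ⟨((hφ.measurable_meanEmbedding a).mul
    (hφ.measurable_meanEmbedding b)).aestronglyMeasurable,
    (hasFiniteIntegral_iff_ofReal (.of_forall fun u => mul_nonneg
      (hφ.meanEmbedding_nonneg a u) (hφ.meanEmbedding_nonneg b u))).mpr ?_⟩
  rw [hφ.lintegral_ofReal_meanEmbedding_mul hK]
  exact ENNReal.ofReal_lt_top

theorem doubleInt_eq_integral_meanEmbedding_mul (a b : Measure ℝ) [IsFiniteMeasure a]
    [IsFiniteMeasure b] :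
    doubleInt K a b = ∫ u, meanEmbedding φ a u * meanEmbedding φ b u ∂ν := by
  have h₀ : ∀ u, 0 ≤ meanEmbedding φ a u * meanEmbedding φ b u := fun u =>
    mul_nonneg (hφ.meanEmbedding_nonneg a u) (hφ.meanEmbedding_nonneg b u)
  have hK₀ : 0 ≤ doubleInt K a b :=
    integral_nonneg fun t => integral_nonneg fun s => hφ.kernel_nonneg t s
  rw [← ENNReal.ofReal_eq_ofReal_iff hK₀ (integral_nonneg h₀),
    ofReal_integral_eq_lintegral_ofReal (hφ.integrable_meanEmbedding_mul hK a b) (.of_forall h₀),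
    hφ.lintegral_ofReal_meanEmbedding_mul hK]

theorem bilinInt_self_eq_integral_sq (p m : Measure ℝ) [IsFiniteMeasure p] [IsFiniteMeasure m] :
    bilinInt K p m p m = ∫ u, (meanEmbedding φ p u - meanEmbedding φ m u) ^ 2 ∂ν := by
  have hsq : ∀ u, (meanEmbedding φ p u - meanEmbedding φ m u) ^ 2
      = (meanEmbedding φ p u * meanEmbedding φ p u - meanEmbedding φ p u * meanEmbedding φ m u)
        - (meanEmbedding φ m u * meanEmbedding φ p u
          - meanEmbedding φ m u * meanEmbedding φ m u) := fun u => by ring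
  have h := hφ.integrable_meanEmbedding_mul hK
  have hp : Integrable (fun u => meanEmbedding φ p u * meanEmbedding φ p u
      - meanEmbedding φ p u * meanEmbedding φ m u) ν := (h p p).sub (h p m)
  have hm : Integrable (fun u => meanEmbedding φ m u * meanEmbedding φ p u
      - meanEmbedding φ m u * meanEmbedding φ m u) ν := (h m p).sub (h m m)
  simp_rw [hsq]
  rw [integral_sub hp hm, integral_sub (h p p) (h p m), integral_sub (h m p) (h m m)]
  simp only [bilinInt, hφ.doubleInt_eq_integral_meanEmbedding_mul hK]
  ring

theorem bilinInt_self_pos (p m : Measure ℝ) [IsFiniteMeasure p] [IsFiniteMeasure m]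
    (hpm : ¬ meanEmbedding φ p =ᵐ[ν] meanEmbedding φ m) : 0 < bilinInt K p m p m := by
  have h := hφ.integrable_meanEmbedding_mul hK
  have hsq : Integrable (fun u => (meanEmbedding φ p u - meanEmbedding φ m u) ^ 2) ν :=
    (((h p p).sub (h p m)).sub ((h m p).sub (h m m))).congr
      (.of_forall fun u => by simp only [Pi.sub_apply]; ring)
  rw [hφ.bilinInt_self_eq_integral_sq hK, integral_pos_iff_support_of_nonneg
    (fun u => sq_nonneg _) hsq]
  refine pos_iff_ne_zero.mpr fun h => hpm ?_
  filter_upwards [measure_eq_zero_iff_ae_notMem.mp h] with u hu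
  simpa [sub_eq_zero] using hu

end IsFeatureFactorization

section ExpAbsKernel

variable {ρ : ℝ}

noncomputable def expAbsKernel (ρ t s : ℝ) : ℝ := Real.exp (-ρ * |t - s|)

noncomputable def causalKernel (ρ t s : ℝ) : ℝ := if s < t then Real.exp (-ρ * (t - s)) else 0

theorem measurable_causalKernel : Measurable (uncurry (causalKernel ρ)) :=
  Measurable.ite (measurableSet_lt measurable_snd measurable_fst) (by fun_prop) measurable_const

theorem causalKernel_nonneg (t s : ℝ) : 0 ≤ causalKernel ρ t s := by
  unfold causalKernel; split_ifs <;> positivity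

theorem causalKernel_le_one (hρ : 0 ≤ ρ) (t s : ℝ) : causalKernel ρ t s ≤ 1 := by
  unfold causalKernel
  split_ifs with h
  · exact Real.exp_le_one_iff.mpr (mul_nonpos_of_nonpos_of_nonneg (neg_nonpos.mpr hρ)
      (sub_nonneg.mpr h.le))
  · exact zero_le_one

theorem norm_causalKernel_le_one (hρ : 0 ≤ ρ) (t s : ℝ) : ‖causalKernel ρ t s‖ ≤ 1 := by
  rw [Real.norm_of_nonneg (causalKernel_nonneg t s)]
  exact causalKernel_le_one hρ t s

theorem isBoundedKernel_causalKernel (hρ : 0 ≤ ρ) : IsBoundedKernel (causalKernel ρ) :=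
  ⟨measurable_causalKernel, 1, norm_causalKernel_le_one hρ⟩

theorem integrable_causalKernel_left (hρ : 0 ≤ ρ) (u : ℝ) (a : Measure ℝ) [IsFiniteMeasure a] :
    Integrable (fun t => causalKernel ρ t u) a :=
  .of_bound (measurable_causalKernel.comp measurable_prodMk_right).aestronglyMeasurable 1
    (.of_forall fun t => norm_causalKernel_le_one hρ t u)

theorem isBoundedKernel_expAbsKernel (hρ : 0 ≤ ρ) : IsBoundedKernel (expAbsKernel ρ) :=
  ⟨by unfold expAbsKernel; fun_prop, 1, fun t s => by
    rw [expAbsKernel, abs_of_pos (Real.exp_pos _)]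
    exact Real.exp_le_one_iff.mpr (mul_nonpos_of_nonpos_of_nonneg (neg_nonpos.mpr hρ)
      (abs_nonneg _))⟩

theorem causalKernel_mul_causalKernel (t s u : ℝ) :
    causalKernel ρ t u * causalKernel ρ s u
      = (Iio (min t s)).indicator (fun u => Real.exp (-ρ * (t + s)) * Real.exp (2 * ρ * u)) u := by
  by_cases ht : u < t <;> by_cases hs : u < s <;>
    simp only [causalKernel, indicator, mem_Iio, lt_min_iff, ht, hs, if_true, if_false, and_true,
      and_false, mul_zero, zero_mul]
  rw [← Real.exp_add, ← Real.exp_add]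
  ring_nf

theorem isFeatureFactorization_expAbsKernel (hρ : 0 < ρ) :
    IsFeatureFactorization (expAbsKernel ρ) (ENNReal.ofReal (2 * ρ) • volume)
      (fun u t => causalKernel ρ t u) where
  measurable := measurable_causalKernel.comp measurable_swap
  nonneg u t := causalKernel_nonneg t u
  bounded := ⟨1, fun u t => causalKernel_le_one hρ.le t u⟩
  integrable t s := by
    simp_rw [causalKernel_mul_causalKernel]
    refine Integrable.smul_measure ((integrable_indicator_iff measurableSet_Iio).mpr ?_)
      ENNReal.ofReal_ne_top
    exact ((integrableOn_exp_mul_Iic (by positivity) _).mono_set Iio_subset_Iic_self).const_mul _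
  eq_integral t s := by
    simp_rw [causalKernel_mul_causalKernel]
    rw [integral_smul_measure, integral_indicator measurableSet_Iio, integral_const_mul,
      ← integral_Iic_eq_integral_Iio, integral_exp_mul_Iic (by positivity),
      ENNReal.toReal_ofReal (by positivity), expAbsKernel, ← max_sub_min_eq_abs',
      smul_eq_mul, mul_left_comm, mul_div_cancel₀ _ (by positivity : 2 * ρ ≠ 0), ← Real.exp_add]
    rw [show max t s = t + s - min t s by linarith [min_add_max t s]]
    ring_nf

theorem continuousWithinAt_causalKernel_Ici (t u : ℝ) :
    ContinuousWithinAt (causalKernel ρ t) (Ici u) u := by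
  by_cases hut : u < t
  · refine ContinuousAt.continuousWithinAt ?_
    have hcont : ContinuousAt (fun v => Real.exp (-ρ * (t - v))) u := by fun_prop
    refine hcont.congr ?_
    filter_upwards [Iio_mem_nhds hut] with v hv
    simp [causalKernel, show v < t from hv]
  · refine (continuousWithinAt_const (b := (0 : ℝ))).congr (fun v hv => ?_) ?_
    · rw [causalKernel, if_neg (not_lt.mpr ((not_lt.mp hut).trans hv))]
    · rw [causalKernel, if_neg hut]

theorem continuousWithinAt_meanEmbedding_causalKernel (hρ : 0 ≤ ρ) (a : Measure ℝ)
    [IsFiniteMeasure a] (u : ℝ) :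
    ContinuousWithinAt (meanEmbedding (fun u t => causalKernel ρ t u) a) (Ici u) u := by
  exact continuousWithinAt_of_dominated (bound := fun _ => 1)
    (.of_forall fun v => (integrable_causalKernel_left hρ v a).aestronglyMeasurable)
    (.of_forall fun v => .of_forall fun t => norm_causalKernel_le_one hρ t v)
    (integrable_const 1) (.of_forall fun t => continuousWithinAt_causalKernel_Ici t u)

theorem eq_of_ae_eq_of_continuousWithinAt_Ici {f g : ℝ → ℝ}
    (hf : ∀ x, ContinuousWithinAt f (Ici x) x) (hg : ∀ x, ContinuousWithinAt g (Ici x) x)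
    (hfg : f =ᵐ[volume] g) : f = g := by
  funext x
  by_contra hne
  have hev : ∀ᶠ y in 𝓝[≥] x, f y - g y ≠ 0 :=
    ((hf x).sub (hg x)).eventually_ne (sub_ne_zero.mpr hne)
  obtain ⟨y, hxy, hsub⟩ := mem_nhdsGE_iff_exists_Ico_subset.mp hev
  have hnull : volume {y | f y ≠ g y} = 0 := ae_iff.mp hfg
  have : volume (Ico x y) = 0 :=
    measure_mono_null (fun z hz => sub_ne_zero.mp (hsub hz)) hnull
  rw [Real.volume_Ico, ENNReal.ofReal_eq_zero] at this
  linarith [mem_Ioi.mp hxy]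

theorem withDensity_exp_Ioi (hρ : 0 ≤ ρ) (a : Measure ℝ) [IsFiniteMeasure a] (u : ℝ) :
    a.withDensity (fun t => ENNReal.ofReal (Real.exp (-ρ * t))) (Ioi u)
      = ENNReal.ofReal (Real.exp (-ρ * u)
        * meanEmbedding (fun u t => causalKernel ρ t u) a u) := by
  rw [meanEmbedding, ← integral_const_mul, ofReal_integral_eq_lintegral_ofReal
    ((integrable_causalKernel_left hρ u a).const_mul _) (.of_forall fun t => mul_nonneg (Real.exp_pos _).le (causalKernel_nonneg t u)),
    withDensity_apply _ measurableSet_Ioi, ← lintegral_indicator measurableSet_Ioi]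
  refine lintegral_congr fun t => ?_
  by_cases hut : u < t
  · rw [indicator_of_mem (show t ∈ Ioi u from hut), causalKernel, if_pos hut, ← Real.exp_add]
    ring_nf
  · rw [indicator_of_notMem (show t ∉ Ioi u from hut), causalKernel, if_neg hut, mul_zero,
      ENNReal.ofReal_zero]

theorem eq_of_meanEmbedding_causalKernel_eq (hρ : 0 ≤ ρ) {P M : Measure ℝ} [IsFiniteMeasure P]
    [IsFiniteMeasure M] (h : meanEmbedding (fun u t => causalKernel ρ t u) P
      = meanEmbedding (fun u t => causalKernel ρ t u) M) : P = M := by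
  set w : ℝ → ℝ≥0∞ := fun t => ENNReal.ofReal (Real.exp (-ρ * t))
  have hw : Measurable w := by fun_prop
  have hIoi : ∀ u, P.withDensity w (Ioi u) = M.withDensity w (Ioi u) := fun u => by
    rw [withDensity_exp_Ioi hρ, withDensity_exp_Ioi hρ, h]
  have hfin : ∀ (Q : Measure ℝ) [IsFiniteMeasure Q] u, Q.withDensity w (Ioi u) ≠ ∞ :=
    fun Q _ u => by rw [withDensity_exp_Ioi hρ]; exact ENNReal.ofReal_ne_top
  have hIoc : ∀ u v, u < v → P.withDensity w (Ioc u v) = M.withDensity w (Ioc u v) :=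
    fun u v huv => by
      rw [← Ioi_sdiff_Ioi,
        measure_sdiff (Ioi_subset_Ioi huv.le) measurableSet_Ioi.nullMeasurableSet (hfin P v),
        measure_sdiff (Ioi_subset_Ioi huv.le) measurableSet_Ioi.nullMeasurableSet (hfin M v),
        hIoi, hIoi]
  have hPM : P.withDensity w = M.withDensity w :=
    Measure.ext_of_Ioc' _ _
      (fun u v _ => ne_top_of_le_ne_top (hfin P u) (measure_mono Ioc_subset_Ioi_self)) hIoc
  have hw₀ : ∀ t, w t ≠ 0 := fun t => ENNReal.ofReal_ne_zero_iff.mpr (Real.exp_pos _)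
  rw [← withDensity_inv_same hw (.of_forall hw₀) (.of_forall fun t => ENNReal.ofReal_ne_top)
    (μ := P), hPM, withDensity_inv_same hw (.of_forall hw₀)
    (.of_forall fun t => ENNReal.ofReal_ne_top)]

theorem bilinInt_expAbsKernel_self_pos (hρ : 0 < ρ) (P M : Measure ℝ) [IsFiniteMeasure P]
    [IsFiniteMeasure M] (hPM : P ≠ M) : 0 < bilinInt (expAbsKernel ρ) P M P M := by
  refine (isFeatureFactorization_expAbsKernel hρ).bilinInt_self_pos
    (isBoundedKernel_expAbsKernel hρ.le) P M fun hae => hPM ?_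
  refine eq_of_meanEmbedding_causalKernel_eq hρ.le (eq_of_ae_eq_of_continuousWithinAt_Ici
    (continuousWithinAt_meanEmbedding_causalKernel hρ.le P)
    (continuousWithinAt_meanEmbedding_causalKernel hρ.le M) ?_)
  exact (Measure.ae_ennreal_smul_measure_iff
    (ENNReal.ofReal_ne_zero_iff.mpr (by positivity))).mp hae

end ExpAbsKernel

noncomputable def diagKernel (t s : ℝ) : ℝ := if s = t then 1 else 0

theorem isBoundedKernel_diagKernel : IsBoundedKernel diagKernel :=
  ⟨Measurable.ite (measurableSet_eq_fun measurable_snd measurable_fst) measurable_const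
    measurable_const, 1, fun t s => by unfold diagKernel; split_ifs <;> norm_num⟩

theorem integral_diagKernel (t : ℝ) (b : Measure ℝ) : ∫ s, diagKernel t s ∂b = b.real {t} := by
  have h : diagKernel t = ({t} : Set ℝ).indicator fun _ => 1 := funext fun s => by
    simp [diagKernel, indicator_apply]
  rw [h, integral_indicator_const _ (measurableSet_singleton t), smul_eq_mul, mul_one]

theorem integrable_measureReal_singleton (a b : Measure ℝ) [IsFiniteMeasure a]
    [IsFiniteMeasure b] : Integrable (fun t => b.real {t}) a := by
  simpa only [integral_diagKernel] using isBoundedKernel_diagKernel.integrable_integral a b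

section Atoms

variable {X : Type*} [MeasurableSpace X] [MeasurableSingletonClass X]

theorem countable_support_measureReal_singleton (μ : Measure X) [IsFiniteMeasure μ] :
    (support fun x => μ.real {x}).Countable :=
  (Measure.countable_meas_level_set_pos (μ := μ) measurable_id).mono fun t ht => by
    simpa [measureReal_def, pos_iff_ne_zero, ENNReal.toReal_eq_zero_iff] using ht

theorem summable_measureReal_singleton (μ : Measure X) [IsFiniteMeasure μ] :
    Summable fun x => μ.real {x} := by
  refine ENNReal.summable_toReal (ne_top_of_le_ne_top (measure_ne_top μ univ) ?_)
  exact (tsum_meas_le_meas_iUnion_of_disjoint μ measurableSet_singleton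
    fun x y hxy => disjoint_singleton.mpr hxy).trans (measure_mono (subset_univ _))

theorem integral_eq_tsum_of_countable_support {μ : Measure X} {f : X → ℝ} (hf : Integrable f μ)
    (hs : (support f).Countable) : ∫ x, f x ∂μ = ∑' x : support f, μ.real {(x : X)} * f x := by
  rw [← setIntegral_eq_integral_of_forall_compl_eq_zero fun x hx => notMem_support.mp hx,
    setIntegral_countable f hs hf.integrableOn]
  rfl

end Atoms

theorem bilinInt_diagKernel_self_nonneg (P M : Measure ℝ) [IsFiniteMeasure P]
    [IsFiniteMeasure M] : 0 ≤ bilinInt diagKernel P M P M := by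
  set f : ℝ → ℝ := fun t => P.real {t} - M.real {t}
  have hf : ∀ (μ : Measure ℝ) [IsFiniteMeasure μ], Integrable f μ := fun μ _ =>
    (integrable_measureReal_singleton μ P).sub (integrable_measureReal_singleton μ M)
  have hs : (support f).Countable :=
    ((countable_support_measureReal_singleton P).union
      (countable_support_measureReal_singleton M)).mono (support_sub _ _)
  have hsum : ∀ (μ : Measure ℝ) [IsFiniteMeasure μ],
      Summable fun t : support f => μ.real {(t : ℝ)} * f t := fun μ _ =>
    (((summable_measureReal_singleton μ).subtype _).mul_right
      (P.real univ + M.real univ)).of_norm_bounded fun t => by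
        rw [norm_mul, Real.norm_of_nonneg measureReal_nonneg]
        refine mul_le_mul_of_nonneg_left ((norm_sub_le _ _).trans (add_le_add ?_ ?_))
          measureReal_nonneg <;>
        · rw [Real.norm_of_nonneg measureReal_nonneg]; exact measureReal_mono (subset_univ _)
  have hbil : bilinInt diagKernel P M P M = ∫ t, f t ∂P - ∫ t, f t ∂M := by
    simp only [bilinInt, doubleInt, integral_diagKernel, f]
    rw [integral_sub (integrable_measureReal_singleton P P) (integrable_measureReal_singleton P M),
      integral_sub (integrable_measureReal_singleton M P) (integrable_measureReal_singleton M M)]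
    ring
  rw [hbil, integral_eq_tsum_of_countable_support (hf P) hs,
    integral_eq_tsum_of_countable_support (hf M) hs, ← (hsum P).tsum_sub (hsum M)]
  exact tsum_nonneg fun t => by rw [← sub_mul]; exact mul_self_nonneg _

theorem liqCost_eq (ρ θ : ℝ) (Xp Xm Yp Ym : Measure ℝ) :
    liqCost ρ θ Xp Xm Yp Ym
      = (1/2) * bilinInt (expAbsKernel ρ) Xp Xm Xp Xm + bilinInt (causalKernel ρ) Xp Xm Yp Ym
        + (1/2) * bilinInt diagKernel Xp Xm Yp Ym + θ * bilinInt diagKernel Xp Xm Xp Xm :=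
  rfl

theorem liqCost_convexComb {ρ : ℝ} (hρ : 0 ≤ ρ) (θ : ℝ) {α : ℝ} (h₀ : 0 ≤ α) (h₁ : α ≤ 1)
    (X₁p X₁m X₀p X₀m Yp Ym : Measure ℝ) [IsFiniteMeasure X₁p] [IsFiniteMeasure X₁m]
    [IsFiniteMeasure X₀p] [IsFiniteMeasure X₀m] [IsFiniteMeasure Yp] [IsFiniteMeasure Ym] :
    liqCost ρ θ (ENNReal.ofReal α • X₁p + ENNReal.ofReal (1 - α) • X₀p)
        (ENNReal.ofReal α • X₁m + ENNReal.ofReal (1 - α) • X₀m) Yp Ym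
      = α * liqCost ρ θ X₁p X₁m Yp Ym + (1 - α) * liqCost ρ θ X₀p X₀m Yp Ym
        - α * (1 - α)
          * ((1/2) * bilinInt (expAbsKernel ρ) (X₁p + X₀m) (X₀p + X₁m) (X₁p + X₀m) (X₀p + X₁m)
            + θ * bilinInt diagKernel (X₁p + X₀m) (X₀p + X₁m) (X₁p + X₀m) (X₀p + X₁m)) := by
  rw [liqCost_eq, liqCost_eq, liqCost_eq,
    (isBoundedKernel_expAbsKernel hρ).bilinInt_convexComb_self h₀ h₁,
    (isBoundedKernel_causalKernel hρ).bilinInt_convexComb_left h₀ h₁,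
    isBoundedKernel_diagKernel.bilinInt_convexComb_self h₀ h₁,
    isBoundedKernel_diagKernel.bilinInt_convexComb_left h₀ h₁]
  ring

end LiquidationCost

open LiquidationCost

theorem cost_strictly_convex_general (ρ θ : ℝ)
    (hρ : 0 < ρ) (hθ : 0 ≤ θ)
    (Yp Ym X0p X0m X1p X1m : Measure ℝ)
    [IsFiniteMeasure Yp] [IsFiniteMeasure Ym]
    [IsFiniteMeasure X0p] [IsFiniteMeasure X0m]
    [IsFiniteMeasure X1p] [IsFiniteMeasure X1m]
    (hne : X1p + X0m ≠ X0p + X1m) :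
    (∀ α : ℝ, α ∈ Set.Ioo (0:ℝ) 1 →
      liqCost ρ θ
          (ENNReal.ofReal α • X1p + ENNReal.ofReal (1-α) • X0p)
          (ENNReal.ofReal α • X1m + ENNReal.ofReal (1-α) • X0m) Yp Ym
        < α * liqCost ρ θ X1p X1m Yp Ym + (1-α) * liqCost ρ θ X0p X0m Yp Ym) ∧
    0 < bilinInt (fun t s => Real.exp (-ρ*|t-s|))
        (X1p + X0m) (X0p + X1m) (X1p + X0m) (X0p + X1m) := by
  have hQ := bilinInt_expAbsKernel_self_pos hρ _ _ hne
  have hD := bilinInt_diagKernel_self_nonneg (X1p + X0m) (X0p + X1m)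
  refine ⟨fun α ⟨hα₀, hα₁⟩ => ?_, hQ⟩
  rw [liqCost_convexComb hρ.le θ hα₀.le hα₁.le]
  have hα : 0 < α * (1 - α) := mul_pos hα₀ (sub_pos.mpr hα₁)
  nlinarith [mul_nonneg hθ hD]

/-- Strict convexity of the cost functional `X ↦ C(X|Y)` on the space of
right-continuous bounded-variation strategies on `[0,T]` with `X_{0-} = x` and
`X_T = 0` (encoded via Jordan pairs of Stieltjes measures supported on `[0,T]` with
total signed mass `-x`), and strict positive definiteness of the kernel
`e^{-ρ|t-s|}` on the difference of two distinct such strategies. -/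
theorem cost_strictly_convex (ρ T θ x y : ℝ)
    (hρ : 0 < ρ) (hT : 0 < T) (hθ : 0 ≤ θ)
    (Yp Ym X0p X0m X1p X1m : Measure ℝ)
    [IsFiniteMeasure Yp] [IsFiniteMeasure Ym]
    [IsFiniteMeasure X0p] [IsFiniteMeasure X0m]
    [IsFiniteMeasure X1p] [IsFiniteMeasure X1m]
    (hYsupp : Yp (Set.Icc 0 T)ᶜ = 0 ∧ Ym (Set.Icc 0 T)ᶜ = 0)
    (hX0supp : X0p (Set.Icc 0 T)ᶜ = 0 ∧ X0m (Set.Icc 0 T)ᶜ = 0)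
    (hX1supp : X1p (Set.Icc 0 T)ᶜ = 0 ∧ X1m (Set.Icc 0 T)ᶜ = 0)
    (hYmass : (Yp Set.univ).toReal - (Ym Set.univ).toReal = -y)
    (hX0mass : (X0p Set.univ).toReal - (X0m Set.univ).toReal = -x)
    (hX1mass : (X1p Set.univ).toReal - (X1m Set.univ).toReal = -x)
    (hne : X1p + X0m ≠ X0p + X1m) :
    (∀ α : ℝ, α ∈ Set.Ioo (0:ℝ) 1 →
      liqCost ρ θ
          (ENNReal.ofReal α • X1p + ENNReal.ofReal (1-α) • X0p)
          (ENNReal.ofReal α • X1m + ENNReal.ofReal (1-α) • X0m) Yp Ym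
        < α * liqCost ρ θ X1p X1m Yp Ym + (1-α) * liqCost ρ θ X0p X0m Yp Ym) ∧
    0 < bilinInt (fun t s => Real.exp (-ρ*|t-s|))
        (X1p + X0m) (X0p + X1m) (X1p + X0m) (X0p + X1m) :=
  cost_strictly_convex_general ρ θ hρ hθ Yp Ym X0p X0m X1p X1m hne
end

section
/- Let ρ, T > 0 and suppose g : [0,T] → ℝ is differentiable with g'(t) = 3ρ g(t) + ρη for a constant η and g(T) = 0, and f : [0,T] → ℝ is differentiable with f'(t) = 3ρ f(t) + 2ρ(η + 2e^{-ρt}x) and f(T) = -(η + 2e^{-ρT}x)/2, for constants η, x. Then g(t) = ((e^{-3ρ(T-t)} - 1)/3)η and f(t) = ((e^{-3ρ(T-t)} - 4)/6)η - e^{-ρt}x for all t ∈ [0,T]. Moreover, if additionally g(0) - f(0) = x, then η = 0 and hence g ≡ 0. -/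
/-! Both equations are affine with the same rate `3ρ`, so solutions with a prescribed terminal
value are unique (Grönwall), and the claimed closed forms are checked by differentiation. At
`t = 0` the condition `g 0 - f 0 = x` reduces to `(e^{-3ρT} + 2) η / 6 = 0`, forcing `η = 0`. -/

open Real Set

theorem eqOn_Icc_of_hasDerivWithinAt_affine {a b c : ℝ} {k f g : ℝ → ℝ}
    (hf : ∀ t ∈ Icc a b, HasDerivWithinAt f (c * f t + k t) (Icc a b) t)
    (hg : ∀ t ∈ Icc a b, HasDerivWithinAt g (c * g t + k t) (Icc a b) t)
    (hb : f b = g b) : EqOn f g (Icc a b) := by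
  have hlip (t : ℝ) : LipschitzWith ‖c‖₊ (fun y => c * y + k t) := by
    simpa using (lipschitzWith_smul c).add (LipschitzWith.const (k t))
  have hleft (h : ℝ → ℝ)
      (hh : ∀ t ∈ Icc a b, HasDerivWithinAt h (c * h t + k t) (Icc a b) t) :
      ∀ t ∈ Ioc a b, HasDerivWithinAt h (c * h t + k t) (Iic t) t := fun t ht =>
    (hh t (Ioc_subset_Icc_self ht)).mono_of_mem_nhdsWithin
      (Filter.mem_of_superset (Icc_mem_nhdsLE ht.1) (Icc_subset_Icc_right ht.2))
  exact ODE_solution_unique_of_mem_Icc_left (s := fun _ => univ)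
    (fun t _ => (hlip t).lipschitzOnWith)
    (HasDerivWithinAt.continuousOn hf) (hleft f hf) (fun _ _ => mem_univ _)
    (HasDerivWithinAt.continuousOn hg) (hleft g hg) (fun _ _ => mem_univ _) hb

theorem hasDerivAt_exp_mul_sub (a T t : ℝ) :
    HasDerivAt (fun s => exp (a * (T - s))) (-a * exp (a * (T - t))) t := by
  simpa [mul_comm] using (((hasDerivAt_id t).const_sub T).const_mul a).exp

noncomputable def gClosedForm (ρ T η t : ℝ) : ℝ :=
  ((exp (-3*ρ*(T-t)) - 1)/3)*η

noncomputable def fClosedForm (ρ T η x t : ℝ) : ℝ :=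
  ((exp (-3*ρ*(T-t)) - 4)/6)*η - exp (-ρ*t)*x

theorem hasDerivAt_gClosedForm (ρ T η t : ℝ) :
    HasDerivAt (gClosedForm ρ T η) (3*ρ*gClosedForm ρ T η t + ρ*η) t := by
  refine (((hasDerivAt_exp_mul_sub (-3*ρ) T t).sub_const 1).div_const 3 |>.mul_const η)
    |>.congr_deriv ?_
  simp only [gClosedForm]
  ring

theorem hasDerivAt_fClosedForm (ρ T η x t : ℝ) :
    HasDerivAt (fClosedForm ρ T η x)
      (3*ρ*fClosedForm ρ T η x t + 2*ρ*(η + 2*exp (-ρ*t)*x)) t := by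
  have hdecay : HasDerivAt (fun s => exp (-ρ*s)) (-ρ * exp (-ρ*t)) t := by
    simpa [mul_comm] using ((hasDerivAt_id t).const_mul (-ρ)).exp
  refine (((((hasDerivAt_exp_mul_sub (-3*ρ) T t).sub_const 4).div_const 6).mul_const η).sub
    (hdecay.mul_const x)).congr_deriv ?_
  simp only [fClosedForm]
  ring

theorem ode_solutions_force_eta_zero_general (ρ T η x : ℝ)
    (hT : 0 < T)
    (f g : ℝ → ℝ)
    (hg : ∀ t ∈ Set.Icc (0:ℝ) T,
      HasDerivWithinAt g (3*ρ*g t + ρ*η) (Set.Icc (0:ℝ) T) t)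
    (hgT : g T = 0)
    (hf : ∀ t ∈ Set.Icc (0:ℝ) T,
      HasDerivWithinAt f (3*ρ*f t + 2*ρ*(η + 2*Real.exp (-ρ*t)*x)) (Set.Icc (0:ℝ) T) t)
    (hfT : f T = -(η + 2*Real.exp (-ρ*T)*x)/2) :
    (∀ t ∈ Set.Icc (0:ℝ) T,
      g t = ((Real.exp (-3*ρ*(T-t)) - 1)/3)*η ∧
      f t = ((Real.exp (-3*ρ*(T-t)) - 4)/6)*η - Real.exp (-ρ*t)*x) ∧
    (g 0 - f 0 = x → η = 0 ∧ ∀ t ∈ Set.Icc (0:ℝ) T, g t = 0) := by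
  have hgEq : EqOn g (gClosedForm ρ T η) (Icc 0 T) :=
    eqOn_Icc_of_hasDerivWithinAt_affine hg
      (fun t _ => (hasDerivAt_gClosedForm ρ T η t).hasDerivWithinAt) (by simp [gClosedForm, hgT])
  have hfEq : EqOn f (fClosedForm ρ T η x) (Icc 0 T) :=
    eqOn_Icc_of_hasDerivWithinAt_affine hf
      (fun t _ => (hasDerivAt_fClosedForm ρ T η x t).hasDerivWithinAt)
      (by simp only [fClosedForm, hfT, sub_self, mul_zero, exp_zero]; ring)
  refine ⟨fun t ht => ⟨hgEq ht, hfEq ht⟩, fun hx => ?_⟩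
  have h0 : (0:ℝ) ∈ Icc 0 T := left_mem_Icc.mpr hT.le
  have hkey : (exp (-3*ρ*T) + 2) * η = 0 := by
    rw [hgEq h0, hfEq h0] at hx
    simp only [gClosedForm, fClosedForm, sub_zero, mul_zero, exp_zero] at hx
    linarith
  have hη : η = 0 := (mul_eq_zero.mp hkey).resolve_left (by positivity)
  exact ⟨hη, fun t ht => by rw [hgEq ht, gClosedForm, hη, mul_zero]⟩

theorem ode_solutions_force_eta_zero (ρ T η x : ℝ)
    (hρ : 0 < ρ) (hT : 0 < T)
    (f g : ℝ → ℝ)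
    (hg : ∀ t ∈ Set.Icc (0:ℝ) T,
      HasDerivWithinAt g (3*ρ*g t + ρ*η) (Set.Icc (0:ℝ) T) t)
    (hgT : g T = 0)
    (hf : ∀ t ∈ Set.Icc (0:ℝ) T,
      HasDerivWithinAt f (3*ρ*f t + 2*ρ*(η + 2*Real.exp (-ρ*t)*x)) (Set.Icc (0:ℝ) T) t)
    (hfT : f T = -(η + 2*Real.exp (-ρ*T)*x)/2) :
    (∀ t ∈ Set.Icc (0:ℝ) T,
      g t = ((Real.exp (-3*ρ*(T-t)) - 1)/3)*η ∧
      f t = ((Real.exp (-3*ρ*(T-t)) - 4)/6)*η - Real.exp (-ρ*t)*x) ∧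
    (g 0 - f 0 = x → η = 0 ∧ ∀ t ∈ Set.Icc (0:ℝ) T, g t = 0) :=
  ode_solutions_force_eta_zero_general ρ T η x hT f g hg hgT hf hfT
end
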